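/- Let y, E : [0,∞) → ℝ be nonnegative and differentiable, with y' ≤ c₁·y³ and E' + ν·y ≤ 0 for constants c₁, ν > 0. If (c₁/ν)·E(0) + arctan(y(0)) < π/2, then y(t) ≤ tan((c₁/ν)·E(0) + arctan(y(0))) for all t ≥ 0. -/

import Mathlib

/-!
The quantity `arctan y + (c₁ / ν) E` is a Lyapunov function: since `y³ / (1 + y²) ≤ y` for
`y ≥ 0`, the cubic growth allowed for `y` is paid for by the energy dissipation `ν y`, so its
derivative is nonpositive. As `E ≥ 0`, `arctan y(t)` therefore stays below its initial value
`(c₁ / ν) E(0) + arctan y(0)`, and applying `tan` (increasing below `π / 2`) bounds `y(t)`.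
-/

open Real Set

lemma antitoneOn_of_hasDerivAt_nonpos {D : Set ℝ} (hD : Convex ℝ D) {f f' : ℝ → ℝ}
    (hf : ∀ x ∈ D, HasDerivAt f (f' x) x) (hf'₀ : ∀ x ∈ interior D, f' x ≤ 0) :
    AntitoneOn f D :=
  antitoneOn_of_hasDerivWithinAt_nonpos hD
    (fun x hx ↦ (hf x hx).continuousAt.continuousWithinAt)
    (fun x hx ↦ (hf x (interior_subset hx)).hasDerivWithinAt) hf'₀

lemma Real.le_tan_of_arctan_le {x s : ℝ} (h : arctan x ≤ s) (hs : s < π / 2) : x ≤ tan s := by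
  have hs' : -(π / 2) < s := (neg_pi_div_two_lt_arctan x).trans_le h
  rwa [← arctan_le_arctan_iff, arctan_tan hs' hs]

lemma div_one_add_sq_le_of_le_mul_pow_three {c y y' : ℝ} (hc : 0 ≤ c) (hy : 0 ≤ y)
    (h : y' ≤ c * y ^ 3) : y' / (1 + y ^ 2) ≤ c * y := by
  rw [div_le_iff₀ (by positivity)]
  nlinarith [mul_nonneg hc hy]

lemma antitoneOn_arctan_add_div_mul {c₁ ν : ℝ} (hc₁ : 0 ≤ c₁) (hν : 0 < ν)
    {y y' E E' : ℝ → ℝ} {D : Set ℝ} (hD : Convex ℝ D)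
    (hyderiv : ∀ t ∈ D, HasDerivAt y (y' t) t) (hEderiv : ∀ t ∈ D, HasDerivAt E (E' t) t)
    (hynn : ∀ t ∈ D, 0 ≤ y t) (hy : ∀ t ∈ D, y' t ≤ c₁ * y t ^ 3)
    (hE : ∀ t ∈ D, E' t + ν * y t ≤ 0) :
    AntitoneOn (fun t ↦ arctan (y t) + c₁ / ν * E t) D := by
  refine antitoneOn_of_hasDerivAt_nonpos hD
    (fun t ht ↦ (hyderiv t ht).arctan.add ((hEderiv t ht).const_mul _)) fun t ht ↦ ?_
  replace ht := interior_subset ht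
  have hy_growth : 1 / (1 + y t ^ 2) * y' t ≤ c₁ * y t := by
    rw [one_div_mul_eq_div]
    exact div_one_add_sq_le_of_le_mul_pow_three hc₁ (hynn t ht) (hy t ht)
  have hE_dissipation : c₁ / ν * E' t ≤ -(c₁ * y t) := calc
    c₁ / ν * E' t ≤ c₁ / ν * -(ν * y t) := by gcongr; linarith [hE t ht]
    _ = -(c₁ * y t) := by field_simp
  linarith

theorem energy_enstrophy_global_bound (c₁ ν : ℝ) (hc₁ : 0 < c₁) (hν : 0 < ν)
    (y y' E E' : ℝ → ℝ)
    (hyderiv : ∀ t ∈ Set.Ici (0:ℝ), HasDerivAt y (y' t) t)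
    (hEderiv : ∀ t ∈ Set.Ici (0:ℝ), HasDerivAt E (E' t) t)
    (hynn : ∀ t ∈ Set.Ici (0:ℝ), 0 ≤ y t)
    (hEnn : ∀ t ∈ Set.Ici (0:ℝ), 0 ≤ E t)
    (hy : ∀ t ∈ Set.Ici (0:ℝ), y' t ≤ c₁ * (y t) ^ 3)
    (hE : ∀ t ∈ Set.Ici (0:ℝ), E' t + ν * y t ≤ 0)
    (hsmall : (c₁ / ν) * E 0 + Real.arctan (y 0) < Real.pi / 2) :
    ∀ t ∈ Set.Ici (0:ℝ), y t ≤ Real.tan ((c₁ / ν) * E 0 + Real.arctan (y 0)) := by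
  intro t ht
  have hlyapunov : arctan (y t) + c₁ / ν * E t ≤ arctan (y 0) + c₁ / ν * E 0 :=
    antitoneOn_arctan_add_div_mul hc₁.le hν (convex_Ici 0) hyderiv hEderiv hynn hy hE
      self_mem_Ici ht ht
  have hEt : 0 ≤ c₁ / ν * E t := by have := hEnn t ht; positivity
  exact le_tan_of_arctan_le (by linarith) hsmall
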